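/- arXiv:1502.02379 — 2 statements merged into one kernel-verified Lean document; each statement's English description precedes it below -/
import Mathlib

section
/- For every continuous function f on [-1,1], the limit as a → 0+ of c_a ∫_{-1}^{1} f(t) (1-t^2)^{a-1} dt equals (f(1) + f(-1))/2, where c_a = Γ(a + 1/2) / (√π Γ(a)). -/
open Real MeasureTheory Set

/-- Pochhammer symbol `(a)_n = a (a+1) ⋯ (a+n-1)`. -/
noncomputable def poch (a : ℝ) (n : ℕ) : ℝ := ∏ i ∈ Finset.range n, (a + i)

/-- Jacobi polynomial `P_n^{(a,b)}(x)`, normalized by `P_n^{(a,b)}(1) = (a+1)_n / n!`. -/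
noncomputable def jacobiP (n : ℕ) (a b x : ℝ) : ℝ :=
  ∑ k ∈ Finset.range (n + 1),
    (poch (a + k + 1) (n - k) * poch (a + b + n + 1) k) /
      ((Nat.factorial k : ℝ) * (Nat.factorial (n - k) : ℝ)) * ((x - 1) / 2) ^ k

/-- Gegenbauer polynomial `C_n^{λ}(x)`. -/
noncomputable def gegenbauerC (n : ℕ) (l x : ℝ) : ℝ :=
  ∑ k ∈ Finset.range (n / 2 + 1),
    (-1 : ℝ) ^ k * poch l (n - k) /
      ((Nat.factorial k : ℝ) * (Nat.factorial (n - 2 * k) : ℝ)) * (2 * x) ^ (n - 2 * k)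

/-- `Z_n^λ(x) = ((n+λ)/λ) C_n^λ(x)`, extended analytically in `λ` through `λ = 0`. -/
noncomputable def gegenbauerZ (n : ℕ) (l x : ℝ) : ℝ :=
  if n = 0 then 1 else
  ∑ k ∈ Finset.range (n / 2 + 1),
    (-1 : ℝ) ^ k * ((n : ℝ) + l) * poch (l + 1) (n - k - 1) /
      ((Nat.factorial k : ℝ) * (Nat.factorial (n - 2 * k) : ℝ)) * (2 * x) ^ (n - 2 * k)

/-!
Both halves of `[-1, 1]` carry mass `1/2` for `c_a (1 - t²)^(a-1) dt`: the substitution `t = √u`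
turns `2 ∫₀¹ (1 - t²)^(a-1) dt` into the Beta integral `B(1/2, a) = √π Γ(a) / Γ(a + 1/2)`.
Since `c_a = a Γ(a + 1/2) / (√π Γ(a + 1)) → 0`, the density tends to `0` uniformly away from
`±1`, so on `[0, 1]` the doubled density is a peak function at `1`, and the peak-function theorem
gives `c_a ∫₀¹ g(t) (1 - t²)^(a-1) dt → g(1)/2`. The half `[-1, 0]` is reflected onto `[0, 1]`.
-/

open Filter Topology

theorem two_mul_integral_one_sub_sq_rpow (b : ℝ) :
    2 * ∫ t in (0:ℝ)..1, (1 - t ^ 2) ^ b = ∫ u in (0:ℝ)..1, u ^ (-(1 / 2) : ℝ) * (1 - u) ^ b := by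
  have h := integral_Icc_deriv_smul_of_deriv_nonneg (f := fun t : ℝ => t ^ 2)
    (f' := fun t => 2 * t) (g := fun u => u ^ (-(1 / 2) : ℝ) * (1 - u) ^ b)
    (by fun_prop) (fun x _ => by simpa using hasDerivAt_pow 2 x)
    (fun x hx => by linarith [hx.1]) zero_le_one
  simp only [smul_eq_mul, one_pow, ne_eq, OfNat.ofNat_ne_zero, not_false_eq_true, zero_pow] at h
  simp only [intervalIntegral.integral_of_le zero_le_one, ← integral_Icc_eq_integral_Ioc]
  rw [← h, ← integral_const_mul]
  simp only [integral_Icc_eq_integral_Ioc]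
  refine setIntegral_congr_fun measurableSet_Ioc fun t ht => ?_
  have ht0 : t ≠ 0 := ht.1.ne'
  rw [rpow_neg (sq_nonneg t), ← sqrt_eq_rpow, sqrt_sq ht.1.le]
  field_simp

theorem Real.Gamma_mul_Gamma_eq_Gamma_add_mul_integral {a b : ℝ} (ha : 0 < a) (hb : 0 < b) :
    Gamma a * Gamma b = Gamma (a + b) * ∫ x in (0:ℝ)..1, x ^ (a - 1) * (1 - x) ^ (b - 1) := by
  have key := Complex.Gamma_mul_Gamma_eq_betaIntegral (s := (a:ℂ)) (t := (b:ℂ))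
    (by simpa using ha) (by simpa using hb)
  have hbeta : Complex.betaIntegral a b =
      ((∫ x in (0:ℝ)..1, x ^ (a - 1) * (1 - x) ^ (b - 1) : ℝ) : ℂ) := by
    rw [Complex.betaIntegral, ← intervalIntegral.integral_ofReal]
    refine intervalIntegral.integral_congr fun x hx => ?_
    rw [uIcc_of_le zero_le_one] at hx
    push_cast
    rw [Complex.ofReal_cpow hx.1, Complex.ofReal_cpow (by linarith [hx.2] : (0:ℝ) ≤ 1 - x)]
    push_cast
    ring
  rw [hbeta, ← Complex.ofReal_add, Complex.Gamma_ofReal, Complex.Gamma_ofReal,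
    Complex.Gamma_ofReal, ← Complex.ofReal_mul, ← Complex.ofReal_mul] at key
  exact_mod_cast key

noncomputable def gegenbauerConst (a : ℝ) : ℝ := Gamma (a + 1 / 2) / (√π * Gamma a)

theorem gegenbauerConst_mul_integral_zero_one {a : ℝ} (ha : 0 < a) :
    gegenbauerConst a * ∫ t in (0:ℝ)..1, (1 - t ^ 2) ^ (a - 1) = 1 / 2 := by
  have hbeta := Real.Gamma_mul_Gamma_eq_Gamma_add_mul_integral one_half_pos ha
  rw [Real.Gamma_one_half_eq, add_comm (1 / 2), show (1 / 2 : ℝ) - 1 = -(1 / 2) by norm_num,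
    ← two_mul_integral_one_sub_sq_rpow] at hbeta
  have hG : 0 < Gamma a := Gamma_pos_of_pos ha
  have hG' : 0 < Gamma (a + 1 / 2) := Gamma_pos_of_pos (by linarith)
  rw [gegenbauerConst, div_mul_eq_mul_div, div_eq_iff (by positivity)]
  linear_combination -hbeta / 2

theorem gegenbauerConst_pos {a : ℝ} (ha : 0 < a) : 0 < gegenbauerConst a := by
  unfold gegenbauerConst
  have := Gamma_pos_of_pos ha
  have : 0 < Gamma (a + 1 / 2) := Gamma_pos_of_pos (by linarith)
  positivity

theorem tendsto_gegenbauerConst : Tendsto gegenbauerConst (𝓝[>] 0) (𝓝 0) := by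
  have hcont : ContinuousAt (fun a : ℝ => a * Gamma (a + 1 / 2) / (√π * Gamma (a + 1))) 0 := by
    have hG : ∀ s : ℝ, 0 < s → ContinuousAt (fun a : ℝ => Gamma (a + s)) 0 := fun s hs =>
      (differentiableAt_Gamma fun m => by linarith [(m.cast_nonneg : (0:ℝ) ≤ m)]).continuousAt.comp
        (by fun_prop)
    refine (continuousAt_id.mul (hG _ one_half_pos)).div (continuousAt_const.mul (hG 1 one_pos)) ?_
    simp [Gamma_one, sqrt_ne_zero'.mpr pi_pos]
  have hlim := hcont.tendsto.mono_left (nhdsWithin_le_nhds (s := Ioi 0))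
  simp only [zero_mul, zero_div] at hlim
  refine hlim.congr' (eventually_nhdsWithin_of_forall fun a (ha : 0 < a) => ?_)
  rw [Gamma_add_one ha.ne', gegenbauerConst]
  field_simp

theorem tendstoUniformlyOn_two_mul_gegenbauerConst_mul_rpow {δ : ℝ} (hδ : 0 < δ) :
    TendstoUniformlyOn (fun a t => 2 * gegenbauerConst a * (1 - t ^ 2) ^ (a - 1)) 0 (𝓝[>] 0)
      {t | δ ≤ 1 - t ^ 2} := by
  have hbound : Tendsto (fun a => 2 * gegenbauerConst a * δ ^ (a - 1)) (𝓝[>] 0) (𝓝 0) := by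
    have hδpow : ContinuousAt (fun a : ℝ => δ ^ (a - 1)) 0 :=
      (continuousAt_const_rpow hδ.ne').comp (by fun_prop)
    simpa using
      (tendsto_gegenbauerConst.const_mul 2).mul (hδpow.tendsto.mono_left nhdsWithin_le_nhds)
  rw [Metric.tendstoUniformlyOn_iff]
  intro ε hε
  filter_upwards [Ioo_mem_nhdsGT one_pos, hbound.eventually (gt_mem_nhds hε)] with a ha hb t ht
  have hc := (gegenbauerConst_pos ha.1).le
  have hw : (1 - t ^ 2) ^ (a - 1) ≤ δ ^ (a - 1) :=
    rpow_le_rpow_of_nonpos hδ ht (by linarith [ha.2])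
  rw [Pi.zero_apply, dist_zero_left, norm_of_nonneg (by have := hδ.le.trans ht; positivity)]
  calc 2 * gegenbauerConst a * (1 - t ^ 2) ^ (a - 1) ≤ 2 * gegenbauerConst a * δ ^ (a - 1) := by
        gcongr
    _ < ε := hb

theorem tendsto_gegenbauerConst_mul_integral_zero_one {g : ℝ → ℝ} (hgi : IntegrableOn g (Icc 0 1))
    (hg1 : ContinuousWithinAt g (Icc 0 1) 1) :
    Tendsto (fun a => gegenbauerConst a * ∫ t in (0:ℝ)..1, g t * (1 - t ^ 2) ^ (a - 1))
      (𝓝[>] 0) (𝓝 (g 1 / 2)) := by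
  set φ : ℝ → ℝ → ℝ := fun a t => 2 * gegenbauerConst a * (1 - t ^ 2) ^ (a - 1)
  have hnonneg : ∀ᶠ a in 𝓝[>] 0, ∀ t ∈ Icc (0:ℝ) 1, 0 ≤ φ a t := by
    filter_upwards [self_mem_nhdsWithin] with a (ha : 0 < a) t ht
    have := gegenbauerConst_pos ha
    have : 0 ≤ 1 - t ^ 2 := by nlinarith [ht.1, ht.2]
    positivity
  have hmass : ∀ᶠ a in 𝓝[>] 0, ∫ t in Icc (0:ℝ) 1, φ a t = 1 := by
    filter_upwards [self_mem_nhdsWithin] with a (ha : 0 < a)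
    rw [integral_Icc_eq_integral_Ioc, ← intervalIntegral.integral_of_le zero_le_one,
      intervalIntegral.integral_const_mul, mul_assoc, gegenbauerConst_mul_integral_zero_one ha]
    norm_num
  have hunif : ∀ u : Set ℝ, IsOpen u → 1 ∈ u → TendstoUniformlyOn φ 0 (𝓝[>] 0) (Icc 0 1 \ u) := by
    intro u hu h1u
    obtain ⟨δ, hδ, hball⟩ := Metric.isOpen_iff.mp hu 1 h1u
    refine (tendstoUniformlyOn_two_mul_gegenbauerConst_mul_rpow hδ).mono fun t ⟨ht, htu⟩ => ?_
    have hδt : δ ≤ 1 - t := by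
      by_contra! h
      refine htu (hball ?_)
      rw [Metric.mem_ball, dist_comm, Real.dist_eq, abs_of_nonneg] <;> linarith [ht.2]
    show δ ≤ 1 - t ^ 2
    nlinarith [ht.1, ht.2]
  have hpeak := tendsto_setIntegral_peak_smul_of_integrableOn_of_tendsto measurableSet_Icc
    measurableSet_Icc subset_rfl self_mem_nhdsWithin measure_Icc_lt_top.ne hnonneg hunif
    (tendsto_const_nhds.congr' (hmass.mono fun _ h => h.symm))
    (Eventually.of_forall fun a => by fun_prop) hgi hg1
  refine (hpeak.div_const 2).congr fun a => ?_
  rw [integral_Icc_eq_integral_Ioc, ← intervalIntegral.integral_of_le zero_le_one,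
    ← intervalIntegral.integral_const_mul, ← intervalIntegral.integral_div]
  congr 1 with t
  simp only [φ, smul_eq_mul]
  ring

theorem intervalIntegrable_one_sub_sq_rpow {a : ℝ} (ha : 0 < a) :
    IntervalIntegrable (fun t : ℝ => (1 - t ^ 2) ^ (a - 1)) volume (-1) 1 := by
  have hI : ∫ t in (0:ℝ)..1, (1 - t ^ 2) ^ (a - 1) ≠ 0 := fun h => by
    simpa [h] using gegenbauerConst_mul_integral_zero_one ha
  have hI' : ∫ t in (-1:ℝ)..0, (1 - t ^ 2) ^ (a - 1) ≠ 0 := by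
    have h := intervalIntegral.integral_comp_neg (a := 0) (b := 1)
      fun t : ℝ => (1 - t ^ 2) ^ (a - 1)
    simp only [neg_sq, neg_zero] at h
    rwa [← h]
  exact (intervalIntegral.intervalIntegrable_of_integral_ne_zero hI').trans
    (intervalIntegral.intervalIntegrable_of_integral_ne_zero hI)

theorem stmt0 (f : ℝ → ℝ) (hf : ContinuousOn f (Icc (-1 : ℝ) 1)) :
    Filter.Tendsto
      (fun a : ℝ => (Real.Gamma (a + 1/2) / (Real.sqrt π * Real.Gamma a)) *
        ∫ t in (-1 : ℝ)..1, f t * (1 - t ^ 2) ^ (a - 1))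
      (nhdsWithin 0 (Ioi 0)) (nhds ((f 1 + f (-1)) / 2)) := by
  have hfR : ContinuousOn f (Icc 0 1) := hf.mono (Icc_subset_Icc (by norm_num) le_rfl)
  have hfL : ContinuousOn (fun t => f (-t)) (Icc 0 1) :=
    hf.comp continuousOn_neg fun t ht => ⟨by linarith [ht.2], by linarith [ht.1]⟩
  have hright := tendsto_gegenbauerConst_mul_integral_zero_one (hfR.integrableOn_Icc)
    (hfR 1 (right_mem_Icc.mpr zero_le_one))
  have hleft := tendsto_gegenbauerConst_mul_integral_zero_one (hfL.integrableOn_Icc)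
    (hfL 1 (right_mem_Icc.mpr zero_le_one))
  rw [show (f 1 + f (-1)) / 2 = f (-1) / 2 + f 1 / 2 by ring]
  refine (hleft.add hright).congr' (eventually_nhdsWithin_of_forall fun a (ha : 0 < a) => ?_)
  have hfw : IntervalIntegrable (fun t => f t * (1 - t ^ 2) ^ (a - 1)) volume (-1) 1 :=
    (intervalIntegrable_one_sub_sq_rpow ha).continuousOn_mul (by rwa [uIcc_of_le (by norm_num)])
  have h0 : (0:ℝ) ∈ uIcc (-1) 1 := by rw [uIcc_of_le (by norm_num)]; norm_num
  have hsplit := intervalIntegral.integral_add_adjacent_intervals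
    (hfw.mono_set (uIcc_subset_uIcc_left h0)) (hfw.mono_set (uIcc_subset_uIcc_right h0))
  have hreflect : ∫ t in (0:ℝ)..1, f (-t) * (1 - t ^ 2) ^ (a - 1)
      = ∫ t in (-1:ℝ)..0, f t * (1 - t ^ 2) ^ (a - 1) := by
    have h := intervalIntegral.integral_comp_neg (a := 0) (b := 1)
      fun t => f t * (1 - t ^ 2) ^ (a - 1)
    simp only [neg_sq, neg_zero] at h
    exact h
  rw [hreflect, ← mul_add, hsplit, gegenbauerConst]
end

section
/- Let a, b ≥ 0 and let y be a polynomial that is orthogonal of degree m with respect to |t|^{2b}(1 - t^2)^{a - 1/2} on [-1,1] (a generalized Gegenbauer polynomial C_m^{(a,b)}). Then y satisfies the difference-differential equation (1 - t^2) y''(t) - (2a + 2b + 1) t y'(t) + (2b/t)( y'(t) - (y(t) - y(-t))/(2t) ) + m(m + 2a + 2b) y(t) = 0 for all t ≠ 0. -/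
/-!
The operator `T` on the left-hand side (without the eigenvalue term) sends `t^k` to
`A_k t^(k-2) - λ_k t^k` with `λ_k = k (k + 2a + 2b)`, so `T + λ_m` lowers the degree of every
polynomial of degree at most `m`. The moments `μ_n = ∫ t^n w` vanish in odd degree and satisfy
`(2n + 1 + 2b) μ_(2n) = (2n + 2 + 2a + 2b) μ_(2n+2)` (integrate the derivative of
`t^(2n+1) |t|^(2b) (1 - t^2)^(a + 1/2)`), and these two facts are exactly what makes `T` symmetric
for `⟨q, r⟩ = ∫ q r w`. Hence `Q = T p + λ_m p` has degree `< m`, and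
`⟨Q, Q⟩ = ⟨p, T Q + λ_m Q⟩ = 0` by orthogonality, so `Q = 0`.
-/

open Real MeasureTheory Set

open Polynomial

namespace GeneralizedGegenbauer

variable (a b : ℝ)

/-- `4 b ⌊k/2⌋ = 2 b (k - [k odd])`, because the reflection term `(y(t) - y(-t)) / (2t)` vanishes
on even monomials and is `t ^ (k - 1)` on odd ones. -/
noncomputable def dunklCoeff (k : ℕ) : ℝ := k * (k - 1) + 4 * b * (k / 2 : ℕ)

noncomputable def eigenvalue (k : ℕ) : ℝ := k * (k + 2 * a + 2 * b)

/-- The operator of the equation without its eigenvalue term, given by its action on monomials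
(see `eval_dunklOp`). -/
noncomputable def dunklOp : ℝ[X] →ₗ[ℝ] ℝ[X] :=
  lsum fun k => LinearMap.toSpanSingleton ℝ ℝ[X]
    (C (dunklCoeff b k) * X ^ (k - 2) - C (eigenvalue a b k) * X ^ k)

variable {a b}

lemma dunklCoeff_of_lt_two {k : ℕ} (hk : k < 2) : dunklCoeff b k = 0 := by
  interval_cases k <;> simp [dunklCoeff]

lemma dunklOp_monomial (k : ℕ) (c : ℝ) :
    dunklOp a b (monomial k c) =
      c • (C (dunklCoeff b k) * X ^ (k - 2) - C (eigenvalue a b k) * X ^ k) := by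
  simp [dunklOp, lsum_apply, sum_monomial_index]

lemma coeff_dunklOp (p : ℝ[X]) (j : ℕ) :
    (dunklOp a b p).coeff j =
      dunklCoeff b (j + 2) * p.coeff (j + 2) - eigenvalue a b j * p.coeff j := by
  induction p using Polynomial.induction_on' with
  | add p q hp hq => simp only [map_add, coeff_add, hp, hq]; ring
  | monomial k c =>
    rw [dunklOp_monomial]
    simp only [coeff_smul, coeff_sub, coeff_C_mul, coeff_X_pow, coeff_monomial, smul_eq_mul]
    by_cases hk : k = j + 2
    · subst hk; simp [mul_comm]
    by_cases hj : k = j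
    · subst hj
      rcases lt_or_ge k 2 with h2 | h2
      · simp [dunklCoeff_of_lt_two h2, mul_comm]
      · simp [show k ≠ k - 2 by omega, mul_comm]
    · have : dunklCoeff b k * (if j = k - 2 then 1 else 0) = 0 := by
        split_ifs with h
        · exact mul_eq_zero_of_left (dunklCoeff_of_lt_two (by omega)) _
        · simp
      simp [this, hk, hj, Ne.symm hj]

lemma degree_dunklOp_add_eigenvalue_lt {p : ℝ[X]} {m : ℕ} (hp : p.natDegree ≤ m) :
    (dunklOp a b p + C (eigenvalue a b m) * p).degree < m := by
  rw [degree_lt_iff_coeff_zero]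
  intro j hj
  rw [coeff_add, coeff_dunklOp, coeff_C_mul,
    coeff_eq_zero_of_natDegree_lt (by omega : p.natDegree < j + 2)]
  rcases hj.eq_or_lt with rfl | hlt
  · ring
  · rw [coeff_eq_zero_of_natDegree_lt (by omega : p.natDegree < j)]; ring

lemma eval_dunklOp (p : ℝ[X]) {t : ℝ} (ht : t ≠ 0) :
    (dunklOp a b p).eval t = (1 - t ^ 2) * p.derivative.derivative.eval t
        - (2 * a + 2 * b + 1) * t * p.derivative.eval t
        + (2 * b / t) * (p.derivative.eval t - (p.eval t - p.eval (-t)) / (2 * t)) := by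
  induction p using Polynomial.induction_on' with
  | add p q hp hq => simp only [map_add, eval_add, hp, hq]; ring
  | monomial k c =>
    rw [dunklOp_monomial]
    simp only [derivative_monomial, eval_monomial, eval_smul, eval_sub, eval_mul, eval_C, eval_pow,
      eval_X, smul_eq_mul]
    obtain _ | _ | k := k
    · simp [dunklCoeff, eigenvalue]
    · simp only [zero_add, dunklCoeff_of_lt_two one_lt_two, eigenvalue, Nat.cast_one, pow_one,
        tsub_self, pow_zero, zero_tsub, mul_one, one_mul, zero_mul, zero_sub]
      field_simp
      ring
    · obtain ⟨j, rfl | rfl⟩ := Nat.even_or_odd' k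
      · rw [(show Even (2 * j + 1 + 1) from ⟨j + 1, by ring⟩).neg_pow]
        have hdiv : (2 * j + 1 + 1) / 2 = j + 1 := by omega
        simp only [dunklCoeff, eigenvalue, hdiv, Nat.cast_add, Nat.cast_mul, Nat.cast_ofNat,
          Nat.cast_one, add_sub_cancel_right, Nat.reduceSubDiff, add_tsub_cancel_right, pow_succ,
          pow_zero, one_mul]
        field_simp
        ring
      · rw [(show Odd (2 * j + 1 + 1 + 1) from ⟨j + 1, by ring⟩).neg_pow]
        have hdiv : (2 * j + 1 + 1 + 1) / 2 = j + 1 := by omega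
        simp only [dunklCoeff, eigenvalue, hdiv, Nat.cast_add, Nat.cast_mul, Nat.cast_ofNat,
          Nat.cast_one, add_sub_cancel_right, Nat.reduceSubDiff, add_tsub_cancel_right, pow_succ,
          pow_zero, one_mul]
        field_simp
        ring

section MomentFunctional

variable {L : ℝ[X] →ₗ[ℝ] ℝ}
  (hodd : ∀ n : ℕ, L (X ^ (2 * n + 1)) = 0)
  (hrec : ∀ n : ℕ, (2 * n + 1 + 2 * b) * L (X ^ (2 * n)) =
    (2 * n + 2 + 2 * a + 2 * b) * L (X ^ (2 * n + 2)))
include hodd hrec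

lemma dunklCoeff_sub_mul_apply_X_pow (k n : ℕ) :
    (dunklCoeff b k - dunklCoeff b n) * L (X ^ (k + n - 2)) =
      (eigenvalue a b k - eigenvalue a b n) * L (X ^ (k + n)) := by
  rcases Nat.even_or_odd' (k + n) with ⟨s, hs | hs⟩
  · obtain _ | j := s
    · obtain ⟨rfl, rfl⟩ : k = 0 ∧ n = 0 := by omega
      simp
    have hsum : (k : ℝ) + n = 2 * j + 2 := by exact_mod_cast (by omega : k + n = 2 * j + 2)
    have hk2 : (2 * (k / 2 : ℕ) : ℝ) = k - (k % 2 : ℕ) := by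
      rw [eq_sub_iff_add_eq]; exact_mod_cast Nat.div_add_mod k 2
    have hn2 : (2 * (n / 2 : ℕ) : ℝ) = n - (k % 2 : ℕ) := by
      rw [eq_sub_iff_add_eq, show k % 2 = n % 2 by omega]; exact_mod_cast Nat.div_add_mod n 2
    have hA : dunklCoeff b k - dunklCoeff b n = (k - n) * (2 * j + 1 + 2 * b) := by
      unfold dunklCoeff
      linear_combination (↑k - ↑n) * hsum + 2 * b * (hk2 - hn2)
    have hlam : eigenvalue a b k - eigenvalue a b n = (k - n) * (2 * j + 2 + 2 * a + 2 * b) := by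
      unfold eigenvalue
      linear_combination (↑k - ↑n) * hsum
    rw [hA, hlam, show k + n - 2 = 2 * j by omega, hs, show 2 * (j + 1) = 2 * j + 2 by ring,
      mul_assoc, hrec j, mul_assoc]
  · rw [hs, hodd, mul_zero]
    obtain _ | j := s
    · rw [dunklCoeff_of_lt_two (by omega), dunklCoeff_of_lt_two (by omega), sub_self, zero_mul]
    · rw [show 2 * (j + 1) + 1 - 2 = 2 * j + 1 by omega, hodd, mul_zero]

omit hodd hrec in
lemma apply_dunklOp_monomial_mul_monomial (k n : ℕ) :
    L (dunklOp a b (monomial k 1) * monomial n 1) =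
      dunklCoeff b k * L (X ^ (k + n - 2)) - eigenvalue a b k * L (X ^ (k + n)) := by
  rw [dunklOp_monomial, one_smul, ← X_pow_eq_monomial, sub_mul, mul_assoc, mul_assoc, ← pow_add,
    ← pow_add, ← smul_eq_C_mul, ← smul_eq_C_mul, map_sub, map_smul, map_smul, smul_eq_mul,
    smul_eq_mul]
  rcases lt_or_ge k 2 with hk | hk
  · simp [dunklCoeff_of_lt_two hk]
  · rw [Nat.sub_add_comm hk]

lemma apply_dunklOp_mul_comm (p q : ℝ[X]) : L (dunklOp a b p * q) = L (p * dunklOp a b q) := by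
  have key : ((LinearMap.mul ℝ ℝ[X]).compl₁₂ (dunklOp a b) LinearMap.id).compr₂ L =
      ((LinearMap.mul ℝ ℝ[X]).compl₁₂ LinearMap.id (dunklOp a b)).compr₂ L := by
    refine LinearMap.ext_basis (basisMonomials ℝ) (basisMonomials ℝ) fun k n => ?_
    simp only [LinearMap.compr₂_apply, LinearMap.compl₁₂_apply, LinearMap.mul_apply',
      LinearMap.id_apply, coe_basisMonomials]
    rw [mul_comm (monomial k 1), apply_dunklOp_monomial_mul_monomial,
      apply_dunklOp_monomial_mul_monomial, add_comm n k, sub_eq_sub_iff_sub_eq_sub, ← sub_mul,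
      ← sub_mul, dunklCoeff_sub_mul_apply_X_pow hodd hrec]
  exact LinearMap.congr_fun₂ key p q

theorem dunklOp_add_eigenvalue_eq_zero (hdef : ∀ q : ℝ[X], L (q * q) = 0 → q = 0) {p : ℝ[X]}
    {m : ℕ} (hdeg : p.natDegree = m) (horth : ∀ q : ℝ[X], q.natDegree < m → L (p * q) = 0) :
    dunklOp a b p + C (eigenvalue a b m) * p = 0 := by
  have horth' : ∀ q : ℝ[X], q.degree < m → L (p * q) = 0 := by
    intro q hq
    rcases eq_or_ne q 0 with rfl | hq0
    · simp
    · exact horth q ((natDegree_lt_iff_degree_lt hq0).mpr hq)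
  have hsymm : ∀ q : ℝ[X], L ((dunklOp a b p + C (eigenvalue a b m) * p) * q) =
      L (p * (dunklOp a b q + C (eigenvalue a b m) * q)) := by
    intro q
    rw [add_mul, mul_add, map_add, map_add, apply_dunklOp_mul_comm hodd hrec, mul_assoc,
      mul_left_comm p]
  have hdeg_lt := degree_dunklOp_add_eigenvalue_lt (a := a) (b := b) hdeg.le
  apply hdef
  rw [hsymm]
  exact horth' _ (degree_dunklOp_add_eigenvalue_lt (natDegree_le_of_degree_le hdeg_lt.le))

end MomentFunctional

noncomputable def weight (a b t : ℝ) : ℝ := |t| ^ (2 * b) * (1 - t ^ 2) ^ (a - 1 / 2)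

lemma intervalIntegrable_one_sub_sq_rpow {r : ℝ} (hr : -1 < r) :
    IntervalIntegrable (fun t : ℝ => (1 - t ^ 2) ^ r) volume (-1) 1 := by
  have hsub : IntervalIntegrable (fun t : ℝ => (1 - t) ^ r) volume 0 1 := by
    simpa using
      ((intervalIntegral.intervalIntegrable_rpow' (a := 0) (b := 1) hr).comp_sub_left 1).symm
  have hright : IntervalIntegrable (fun t : ℝ => (1 - t ^ 2) ^ r) volume 0 1 := by
    refine (hsub.continuousOn_mul (g := fun t => (1 + t) ^ r) ?_).congr fun t ht => ?_
    · exact ContinuousOn.rpow_const (by fun_prop) fun t ht => Or.inl (by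
        rw [uIcc_of_le zero_le_one] at ht; linarith [ht.1])
    · rw [uIoc_of_le zero_le_one] at ht
      rw [← Real.mul_rpow (by linarith [ht.1]) (by linarith [ht.2])]
      ring_nf
  have hleft : IntervalIntegrable (fun t : ℝ => (1 - t ^ 2) ^ r) volume (-1) 0 := by
    simpa using
      ((IntervalIntegrable.iff_comp_neg (f := fun t : ℝ => (1 - t ^ 2) ^ r)).mp hright).symm
  exact hleft.trans hright

lemma weight_neg (a b t : ℝ) : weight a b (-t) = weight a b t := by
  simp [weight]

lemma weight_pos {t : ℝ} (ht0 : t ≠ 0) (ht : t ^ 2 < 1) : 0 < weight a b t :=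
  mul_pos (Real.rpow_pos_of_pos (abs_pos.mpr ht0) _) (Real.rpow_pos_of_pos (by linarith) _)

lemma weight_nonneg {t : ℝ} (ht : t ^ 2 ≤ 1) : 0 ≤ weight a b t :=
  mul_nonneg (Real.rpow_nonneg (abs_nonneg t) _) (Real.rpow_nonneg (by linarith) _)

lemma abs_rpow_two_mul (t b : ℝ) : |t| ^ (2 * b) = (t ^ 2) ^ b := by
  rw [Real.rpow_mul (abs_nonneg t), Real.rpow_two, sq_abs]

lemma intervalIntegrable_mul_weight (ha : -1 / 2 < a) (hb : 0 ≤ b) {g : ℝ → ℝ}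
    (hg : ContinuousOn g (uIcc (-1) 1)) :
    IntervalIntegrable (fun t => g t * weight a b t) volume (-1) 1 := by
  have habs : Continuous fun t : ℝ => |t| ^ (2 * b) :=
    continuous_abs.rpow_const fun _ => Or.inr (by linarith)
  simpa [weight, mul_assoc] using (intervalIntegrable_one_sub_sq_rpow (r := a - 1 / 2)
    (by linarith)).continuousOn_mul (hg.mul habs.continuousOn)

lemma integral_pow_odd_mul_weight (a b : ℝ) (n : ℕ) :
    ∫ t in (-1 : ℝ)..1, t ^ (2 * n + 1) * weight a b t = 0 := by
  have h := intervalIntegral.integral_comp_neg (a := -1) (b := 1)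
    fun t => t ^ (2 * n + 1) * weight a b t
  simp only [neg_neg, weight_neg, Odd.neg_pow ⟨n, rfl⟩, neg_mul,
    intervalIntegral.integral_neg] at h
  linarith

lemma hasDerivAt_pow_mul_weight_primitive {t : ℝ} (n : ℕ) (ht0 : t ≠ 0) (ht : t ^ 2 < 1) :
    HasDerivAt (fun s : ℝ => s ^ (2 * n + 1) * (s ^ 2) ^ b * (1 - s ^ 2) ^ (a + 1 / 2))
      ((2 * n + 1 + 2 * b) * (t ^ (2 * n) * weight a b t) -
        (2 * n + 2 + 2 * a + 2 * b) * (t ^ (2 * n + 2) * weight a b t)) t := by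
  have ht2 : t ^ 2 ≠ 0 := pow_ne_zero 2 ht0
  have h1 : 1 - t ^ 2 ≠ 0 := by linarith
  have d : HasDerivAt
      (fun s : ℝ => s ^ (2 * n + 1) * (s ^ 2) ^ b * (1 - s ^ 2) ^ (a + 1 / 2)) _ t :=
    ((hasDerivAt_pow (2 * n + 1) t).mul
      ((hasDerivAt_pow 2 t).rpow_const (p := b) (Or.inl ht2))).mul
      (((hasDerivAt_pow 2 t).const_sub 1).rpow_const (p := a + 1 / 2) (Or.inl h1))
  convert d using 1
  simp only [Pi.mul_apply]
  rw [weight, abs_rpow_two_mul, Real.rpow_sub_one ht2, show a + 1 / 2 - 1 = a - 1 / 2 by ring,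
    show a + 1 / 2 = a - 1 / 2 + 1 by ring, Real.rpow_add_one h1]
  push_cast
  field_simp
  ring

lemma integral_pow_mul_weight_rec (ha : -1 / 2 < a) (hb : 0 ≤ b) (n : ℕ) :
    (2 * n + 1 + 2 * b) * ∫ t in (-1 : ℝ)..1, t ^ (2 * n) * weight a b t =
      (2 * n + 2 + 2 * a + 2 * b) * ∫ t in (-1 : ℝ)..1, t ^ (2 * n + 2) * weight a b t := by
  have hint : ∀ k : ℕ, IntervalIntegrable (fun t => t ^ k * weight a b t) volume (-1) 1 :=
    fun k => intervalIntegrable_mul_weight ha hb (continuous_pow k).continuousOn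
  have hcont :
      Continuous fun s : ℝ => s ^ (2 * n + 1) * (s ^ 2) ^ b * (1 - s ^ 2) ^ (a + 1 / 2) :=
    ((continuous_pow _).mul ((continuous_pow 2).rpow_const fun _ => Or.inr hb)).mul
      ((continuous_const.sub (continuous_pow 2)).rpow_const fun _ => Or.inr (by linarith))
  have hftc := integral_eq_of_hasDerivAt_off_countable_of_le _ _ (by norm_num : (-1 : ℝ) ≤ 1)
    (countable_singleton 0) hcont.continuousOn
    (fun t ht => hasDerivAt_pow_mul_weight_primitive n ht.2 (by nlinarith [ht.1.1, ht.1.2]))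
    (((hint _).const_mul _).sub ((hint _).const_mul _))
  rw [intervalIntegral.integral_sub ((hint _).const_mul _) ((hint _).const_mul _),
    intervalIntegral.integral_const_mul, intervalIntegral.integral_const_mul] at hftc
  have hzero : (0 : ℝ) ^ (a + 1 / 2) = 0 := Real.zero_rpow (by linarith)
  norm_num [hzero] at hftc
  linarith

lemma eq_zero_of_integral_mul_self_mul_weight_eq_zero (ha : -1 / 2 < a) (hb : 0 ≤ b) {q : ℝ[X]}
    (h : ∫ t in (-1 : ℝ)..1, (q * q).eval t * weight a b t = 0) : q = 0 := by
  by_contra hq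
  have hnonneg :
      0 ≤ᵐ[volume.restrict (uIoc (-1) 1)] fun t => (q * q).eval t * weight a b t := by
    refine ae_restrict_of_forall_mem measurableSet_uIoc fun t ht => ?_
    rw [uIoc_of_le (by norm_num)] at ht
    have : t ^ 2 ≤ 1 := by nlinarith [ht.1, ht.2]
    simpa only [Pi.zero_apply, eval_mul] using
      mul_nonneg (mul_self_nonneg _) (weight_nonneg this)
  have hsupport : Ioo 0 1 \ {t | q.IsRoot t} ⊆
      Function.support (fun t => (q * q).eval t * weight a b t) ∩ Ioc (-1) 1 := by
    rintro t ⟨ht, hroot⟩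
    refine ⟨?_, by linarith [ht.1], ht.2.le⟩
    have hw := weight_pos (a := a) (b := b) ht.1.ne' (by nlinarith [ht.1, ht.2])
    simpa [eval_mul, hw.ne'] using hroot
  have hpos :
      0 < volume (Function.support (fun t => (q * q).eval t * weight a b t) ∩ Ioc (-1) 1) :=
    calc 0 < volume (Ioo (0 : ℝ) 1 \ {t | q.IsRoot t}) := by
          rw [measure_sdiff_null ((finite_setOfPred_isRoot hq).measure_zero _), Real.volume_Ioo]
          norm_num
      _ ≤ _ := measure_mono hsupport
  have := (intervalIntegral.integral_pos_iff_support_of_nonneg_ae' hnonneg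
    (intervalIntegrable_mul_weight ha hb (q * q).continuousOn)).mpr ⟨by norm_num, hpos⟩
  exact this.ne' h

/-- Defined through the moments, so that it is linear without integrability side conditions. -/
noncomputable def momentFunctional (a b : ℝ) : ℝ[X] →ₗ[ℝ] ℝ :=
  lsum fun n => (∫ t in (-1 : ℝ)..1, t ^ n * weight a b t) • LinearMap.id

lemma momentFunctional_apply (ha : -1 / 2 < a) (hb : 0 ≤ b) (p : ℝ[X]) :
    momentFunctional a b p = ∫ t in (-1 : ℝ)..1, p.eval t * weight a b t := by
  induction p using Polynomial.induction_on' with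
  | add p q hp hq =>
    rw [map_add, hp, hq, ← intervalIntegral.integral_add
      (intervalIntegrable_mul_weight ha hb p.continuousOn)
      (intervalIntegrable_mul_weight ha hb q.continuousOn)]
    simp only [eval_add, add_mul]
  | monomial n c =>
    simp only [momentFunctional, lsum_apply, LinearMap.smul_apply, LinearMap.id_apply, smul_eq_mul,
      sum_monomial_index, mul_zero, eval_monomial, mul_assoc, intervalIntegral.integral_const_mul]
    ring

end GeneralizedGegenbauer

open GeneralizedGegenbauer

theorem stmt3_general (a b : ℝ) (ha : 0 ≤ a) (hb : 0 ≤ b) (m : ℕ) (p : Polynomial ℝ)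
    (hdeg : p.natDegree = m)
    (horth : ∀ q : Polynomial ℝ, q.natDegree < m →
      ∫ t in (-1 : ℝ)..1,
        p.eval t * q.eval t * |t| ^ (2 * b) * (1 - t ^ 2) ^ (a - 1/2) = 0) :
    ∀ t : ℝ, t ≠ 0 →
      (1 - t ^ 2) * p.derivative.derivative.eval t
        - (2 * a + 2 * b + 1) * t * p.derivative.eval t
        + (2 * b / t) * (p.derivative.eval t - (p.eval t - p.eval (-t)) / (2 * t))
        + (m : ℝ) * ((m : ℝ) + 2 * a + 2 * b) * p.eval t = 0 := by
  intro t ht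
  have ha' : -1 / 2 < a := by linarith
  have hL : dunklOp a b p + C (eigenvalue a b m) * p = 0 := by
    refine dunklOp_add_eigenvalue_eq_zero (L := momentFunctional a b) (fun n => ?_) (fun n => ?_)
      (fun q hq => eq_zero_of_integral_mul_self_mul_weight_eq_zero ha' hb ?_) hdeg (fun q hq => ?_)
    · simpa [momentFunctional_apply ha' hb] using integral_pow_odd_mul_weight a b n
    · simpa [momentFunctional_apply ha' hb] using integral_pow_mul_weight_rec ha' hb n
    · rwa [← momentFunctional_apply ha' hb]
    · rw [momentFunctional_apply ha' hb]
      simpa [weight, mul_assoc] using horth q hq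
  have hLt := congrArg (eval t) hL
  rw [eval_add, eval_dunklOp p ht, eval_mul, eval_C, eval_zero, eigenvalue] at hLt
  linear_combination hLt

theorem stmt3 (a b : ℝ) (ha : 0 ≤ a) (hb : 0 ≤ b) (m : ℕ) (p : Polynomial ℝ)
    (hp : p ≠ 0) (hdeg : p.natDegree = m)
    (horth : ∀ q : Polynomial ℝ, q.natDegree < m →
      ∫ t in (-1 : ℝ)..1,
        p.eval t * q.eval t * |t| ^ (2 * b) * (1 - t ^ 2) ^ (a - 1/2) = 0) :
    ∀ t : ℝ, t ≠ 0 →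
      (1 - t ^ 2) * p.derivative.derivative.eval t
        - (2 * a + 2 * b + 1) * t * p.derivative.eval t
        + (2 * b / t) * (p.derivative.eval t - (p.eval t - p.eval (-t)) / (2 * t))
        + (m : ℝ) * ((m : ℝ) + 2 * a + 2 * b) * p.eval t = 0 :=
  stmt3_general a b ha hb m p hdeg horth
end
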